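/- With g₀ = u⁴v − u²v³ − 2v⁵ and g₀' = −u⁵ + 2u³v² + 2uv⁴ in ℝ[u,v], one has u·g₀ + v·g₀' = u³v³, and both differential operators g₀(∂_x,∂_y) and g₀'(∂_x,∂_y) annihilate the degree-8 form f₀ = 8x⁸ + 112x⁶y² + 56x²y⁶ − y⁸. -/

import Mathlib

open MvPolynomial

/-- The partial derivative `∂_x` as a linear endomorphism of `ℝ[x,y]`. -/
noncomputable def pd0 : Module.End ℝ (MvPolynomial (Fin 2) ℝ) :=
  (pderiv (0 : Fin 2)).toLinearMap

/-- The partial derivative `∂_y` as a linear endomorphism of `ℝ[x,y]`. -/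
noncomputable def pd1 : Module.End ℝ (MvPolynomial (Fin 2) ℝ) :=
  (pderiv (1 : Fin 2)).toLinearMap

/-- The action of a dual form `g(u,v)` on a binary form `f(x,y)` by substituting
`u = ∂_x`, `v = ∂_y`. -/
noncomputable def diffOp (g f : MvPolynomial (Fin 2) ℝ) : MvPolynomial (Fin 2) ℝ :=
  (AddMonoidAlgebra.coeff g).sum fun m c => c • ((pd0 ^ m 0 * pd1 ^ m 1) f)

/-- The linear binary form `a·x + b·y`. -/
noncomputable def linForm (a b : ℝ) : MvPolynomial (Fin 2) ℝ := C a * X 0 + C b * X 1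

/-- The real rank of a binary form of degree `d`: the least `r` admitting a
decomposition `f = ∑ cᵢ (aᵢ x + bᵢ y)^d`. -/
noncomputable def realRank (d : ℕ) (f : MvPolynomial (Fin 2) ℝ) : ℕ :=
  sInf {r | ∃ c a b : Fin r → ℝ, f = ∑ i, C (c i) * linForm (a i) (b i) ^ d}

/-!
The partial derivatives commute, so substituting `u = ∂_x`, `v = ∂_y` is the evaluation
homomorphism of `ℝ[u,v]` into the commutative algebra they generate. Hence `diffOp g` is
additive and multiplicative in `g`, and both annihilation claims reduce to a finite computation
of fifth-order derivatives of `f₀`; the identity `u·g₀ + v·g₀' = u³v³` is a ring identity.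
-/

theorem MvPolynomial.pderiv_pderiv_comm {σ R : Type*} [CommSemiring R] (i j : σ)
    (p : MvPolynomial σ R) : pderiv i (pderiv j p) = pderiv j (pderiv i p) := by
  classical
  ext m
  simp only [coeff_pderiv, Finsupp.add_apply, add_right_comm m (Finsupp.single i 1)]
  by_cases h : i = j
  · subst h; rfl
  · simp [h, Ne.symm h]; ring

@[simp]
theorem MvPolynomial.pderiv_ofNat {σ R : Type*} [CommSemiring R] (i : σ) (n : ℕ)
    [n.AtLeastTwo] : pderiv i (ofNat(n) : MvPolynomial σ R) = 0 := by
  rw [← map_ofNat C n]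
  exact pderiv_C

open scoped IsMulCommutative

section DiffOpHom

variable (σ R : Type*) [CommSemiring R]

noncomputable abbrev constCoeffDiffOps : Subalgebra R (Module.End R (MvPolynomial σ R)) :=
  Algebra.adjoin R (Set.range fun i => (pderiv i).toLinearMap)

instance : IsMulCommutative (constCoeffDiffOps σ R) :=
  Algebra.isMulCommutative_adjoin R <| by
    rintro _ ⟨i, rfl⟩ _ ⟨j, rfl⟩
    exact LinearMap.ext (pderiv_pderiv_comm i j)

variable {σ R}

noncomputable def pderivOp (i : σ) : constCoeffDiffOps σ R :=
  ⟨(pderiv i).toLinearMap, Algebra.subset_adjoin ⟨i, rfl⟩⟩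

variable (σ R) in
noncomputable def diffOpHom : MvPolynomial σ R →ₐ[R] Module.End R (MvPolynomial σ R) :=
  (constCoeffDiffOps σ R).val.comp (aeval pderivOp)

@[simp]
theorem diffOpHom_X (i : σ) : diffOpHom σ R (X i) = (pderiv i).toLinearMap := by
  simp [diffOpHom, pderivOp]

end DiffOpHom

theorem diffOp_eq_diffOpHom (g f : MvPolynomial (Fin 2) ℝ) :
    diffOp g f = diffOpHom (Fin 2) ℝ g f := by
  simp only [diffOp, diffOpHom, AlgHom.comp_apply, aeval_def, eval₂, map_finsuppSum]
  rw [Finsupp.sum, Finsupp.sum, LinearMap.sum_apply]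
  refine Finset.sum_congr rfl fun m _ => ?_
  rw [Finsupp.prod_fintype _ _ fun i => pow_zero _, Fin.prod_univ_two, ← Algebra.smul_def,
    map_smul]
  rfl

/-- With `g₀ = u⁴v − u²v³ − 2v⁵` and `g₀' = −u⁵ + 2u³v² + 2uv⁴`, one has
`u·g₀ + v·g₀' = u³v³`, and both operators annihilate
`f₀ = 8x⁸ + 112x⁶y² + 56x²y⁶ − y⁸`. -/
theorem apolar_example_deg8_first :
    (X 0 * (X 0 ^ 4 * X 1 - X 0 ^ 2 * X 1 ^ 3 - 2 * X 1 ^ 5)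
        + X 1 * (-X 0 ^ 5 + 2 * X 0 ^ 3 * X 1 ^ 2 + 2 * X 0 * X 1 ^ 4)
        = (X 0 ^ 3 * X 1 ^ 3 : MvPolynomial (Fin 2) ℝ)) ∧
    diffOp (X 0 ^ 4 * X 1 - X 0 ^ 2 * X 1 ^ 3 - 2 * X 1 ^ 5)
        (8 * X 0 ^ 8 + 112 * X 0 ^ 6 * X 1 ^ 2 + 56 * X 0 ^ 2 * X 1 ^ 6 - X 1 ^ 8) = 0 ∧
    diffOp (-X 0 ^ 5 + 2 * X 0 ^ 3 * X 1 ^ 2 + 2 * X 0 * X 1 ^ 4)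
        (8 * X 0 ^ 8 + 112 * X 0 ^ 6 * X 1 ^ 2 + 56 * X 0 ^ 2 * X 1 ^ 6 - X 1 ^ 8) = 0 := by
  refine ⟨by ring, ?_, ?_⟩ <;>
  · simp only [diffOp_eq_diffOpHom, map_add, map_sub, map_mul, map_neg, map_pow, map_ofNat,
      diffOpHom_X, LinearMap.add_apply, LinearMap.sub_apply, LinearMap.neg_apply,
      Module.End.mul_apply, Module.End.pow_apply, Module.End.ofNat_apply,
      Function.iterate_succ_apply', Function.iterate_zero_apply, Derivation.coeFn_coe]
    simp only [map_zero, map_add, map_nsmul, Derivation.leibniz, Derivation.leibniz_pow,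
      pderiv_X_self, pderiv_X_of_ne (show (0 : Fin 2) ≠ 1 by decide),
      pderiv_X_of_ne (show (1 : Fin 2) ≠ 0 by decide), pderiv_ofNat, smul_eq_mul, mul_zero,
      add_zero, mul_one]
    ring
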